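/- Let u, p, q be complex numbers with |u| < 1, |up| < 1, |uq| < 1, and |upq| < 1. Then Σ_{v≥0} u^v (Σ_{0≤j≤v} p^j)(Σ_{0≤j≤v} q^j) = (1 - pqu²) / ((1-upq)(1-up)(1-uq)(1-u)). -/
import Mathlib

open Finset

/-- Auxiliary: `D p q k = (∑_{j≤k} q^j) + p * ∑_{j<k} p^j`. -/
noncomputable def geomD (p q : ℂ) (k : ℕ) : ℂ :=
  (∑ j ∈ Finset.range (k + 1), q ^ j) + p * ∑ j ∈ Finset.range k, p ^ j

lemma geomD_succ (p q : ℂ) (k : ℕ) :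
    geomD p q (k + 1) = geomD p q k + q ^ (k + 1) + p ^ (k + 1) := by
  simp only [geomD, Finset.sum_range_succ]
  ring

/-- Finite combinatorial identity. -/
lemma geom_finID (p q : ℂ) (v : ℕ) :
    (∑ i ∈ Finset.range (v + 1), p ^ i) * (∑ j ∈ Finset.range (v + 1), q ^ j)
      = ∑ w ∈ Finset.range (v + 1), (p * q) ^ w * geomD p q (v - w) := by
  induction v with
  | zero => simp [geomD]
  | succ v ih =>
    rw [Finset.sum_range_succ (fun i => p ^ i), Finset.sum_range_succ (fun j => q ^ j),
      Finset.sum_range_succ (fun w => (p * q) ^ w * geomD p q (v + 1 - w))]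
    have h1 : ∀ w ∈ Finset.range (v + 1),
        (p * q) ^ w * geomD p q (v + 1 - w)
          = (p * q) ^ w * geomD p q (v - w) + p ^ w * q ^ (v + 1) + q ^ w * p ^ (v + 1) := by
      intro w hw
      have hw' : w ≤ v := by simpa [Nat.lt_succ_iff] using hw
      have hsub : v + 1 - w = (v - w) + 1 := by omega
      rw [hsub, geomD_succ]
      have hq : p ^ w * q ^ w * q ^ (v - w + 1) = p ^ w * q ^ (v + 1) := by
        rw [mul_assoc, ← pow_add]
        congr 2
        omega
      have hp : p ^ w * q ^ w * p ^ (v - w + 1) = q ^ w * p ^ (v + 1) := by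
        rw [mul_comm (p ^ w) (q ^ w), mul_assoc, mul_comm (p ^ w), ← pow_add]
        congr 2
        omega
      calc (p * q) ^ w * (geomD p q (v - w) + q ^ (v - w + 1) + p ^ (v - w + 1))
          = (p * q) ^ w * geomD p q (v - w) + p ^ w * q ^ w * q ^ (v - w + 1)
            + p ^ w * q ^ w * p ^ (v - w + 1) := by rw [mul_pow]; ring
        _ = _ := by rw [hq, hp]
    rw [Finset.sum_congr rfl h1, Finset.sum_add_distrib, Finset.sum_add_distrib, ← ih]
    have hsum1 : ∑ w ∈ Finset.range (v + 1), p ^ w * q ^ (v + 1)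
        = (∑ w ∈ Finset.range (v + 1), p ^ w) * q ^ (v + 1) := by
      rw [Finset.sum_mul]
    have hsum2 : ∑ w ∈ Finset.range (v + 1), q ^ w * p ^ (v + 1)
        = (∑ w ∈ Finset.range (v + 1), q ^ w) * p ^ (v + 1) := by
      rw [Finset.sum_mul]
    rw [hsum1, hsum2]
    have h0 : geomD p q (v + 1 - (v + 1)) = 1 := by simp [geomD]
    rw [h0]
    ring

lemma geom_cauchy_term (x q : ℂ) (v : ℕ) :
    ∑ k ∈ Finset.range (v + 1), x ^ k * (x * q) ^ (v - k)
      = x ^ v * ∑ j ∈ Finset.range (v + 1), q ^ j := by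
  rw [Finset.mul_sum]
  rw [← Finset.sum_range_reflect (fun j => x ^ v * q ^ j) (v + 1)]
  apply Finset.sum_congr rfl
  intro k hk
  have hk' : k ≤ v := by simpa [Nat.lt_succ_iff] using hk
  have h1 : v + 1 - 1 - k = v - k := by omega
  rw [h1, mul_pow, ← mul_assoc, ← pow_add]
  congr 2
  omega

lemma summable_norm_geom (x : ℂ) (hx : ‖x‖ < 1) : Summable fun n : ℕ => ‖x ^ n‖ := by
  simpa [norm_pow] using summable_geometric_of_lt_one (norm_nonneg x) hx

lemma summable_norm_geom_partial (x q : ℂ) (hx : ‖x‖ < 1) (hxq : ‖x * q‖ < 1) :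
    Summable fun v : ℕ => ‖x ^ v * ∑ j ∈ Finset.range (v + 1), q ^ j‖ := by
  have := summable_norm_sum_mul_range_of_summable_norm
    (summable_norm_geom x hx) (summable_norm_geom (x * q) hxq)
  simpa [geom_cauchy_term x q] using this

lemma tsum_geom_partial (x q : ℂ) (hx : ‖x‖ < 1) (hxq : ‖x * q‖ < 1) :
    ∑' v : ℕ, x ^ v * ∑ j ∈ Finset.range (v + 1), q ^ j = (1 - x)⁻¹ * (1 - x * q)⁻¹ := by
  have := tsum_mul_tsum_eq_tsum_sum_range_of_summable_norm
    (f := fun n : ℕ => x ^ n) (g := fun n : ℕ => (x * q) ^ n)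
    (summable_norm_geom x hx) (summable_norm_geom (x * q) hxq)
  rw [tsum_geometric_of_norm_lt_one hx, tsum_geometric_of_norm_lt_one hxq] at this
  rw [this]
  exact tsum_congr fun v => (geom_cauchy_term x q v).symm

/-- For complex `u, p, q` with `|u| < 1`, `|up| < 1`, `|uq| < 1`, `|upq| < 1`,
`∑_{v≥0} u^v (∑_{0≤j≤v} p^j)(∑_{0≤j≤v} q^j)
  = (1 - pqu²)/((1-upq)(1-up)(1-uq)(1-u))`. -/
theorem geom_partial_sum_identity (u p q : ℂ)
    (hu : ‖u‖ < 1) (hup : ‖u * p‖ < 1) (huq : ‖u * q‖ < 1) (hupq : ‖u * p * q‖ < 1) :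
    ∑' v : ℕ, u ^ v * (∑ j ∈ Finset.range (v + 1), p ^ j) *
        (∑ j ∈ Finset.range (v + 1), q ^ j) =
      (1 - p * q * u ^ 2) / ((1 - u * p * q) * (1 - u * p) * (1 - u * q) * (1 - u)) := by
  have ne1 : ∀ x : ℂ, ‖x‖ < 1 → (1 : ℂ) - x ≠ 0 := by
    intro x hx h
    rw [sub_eq_zero] at h
    rw [← h] at hx
    simp at hx
  set A : ℕ → ℂ := fun k => u ^ k * ∑ j ∈ Finset.range (k + 1), q ^ j with hAdef
  set B : ℕ → ℂ := fun k => u ^ k * ∑ j ∈ Finset.range (k + 1), p ^ j with hBdef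
  set F : ℕ → ℂ := fun k => u ^ k * (p * ∑ j ∈ Finset.range k, p ^ j) with hFdef
  set g : ℕ → ℂ := fun k => u ^ k * geomD p q k with hgdef
  have hA : Summable fun k => ‖A k‖ := summable_norm_geom_partial u q hu huq
  have hB : Summable fun k => ‖B k‖ := summable_norm_geom_partial u p hu hup
  have hFeq : ∀ k, F (k + 1) = u * p * B k := by
    intro k
    simp only [hFdef, hBdef, pow_succ]
    ring
  have hFs : Summable fun k => ‖F k‖ := by
    rw [← summable_nat_add_iff 1]
    simpa only [hFeq, norm_mul] using hB.mul_left ‖u * p‖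
  have hgAF : ∀ k, g k = A k + F k := by
    intro k
    simp only [hgdef, hAdef, hFdef, geomD]
    ring
  have hg : Summable fun k => ‖g k‖ := by
    refine Summable.of_nonneg_of_le (fun k => norm_nonneg _) (fun k => ?_) (hA.add hFs)
    rw [hgAF k]
    exact norm_add_le _ _
  have hf : Summable fun k : ℕ => ‖(u * p * q) ^ k‖ := summable_norm_geom _ hupq
  have htsumF : ∑' k, F k = u * p * ((1 - u)⁻¹ * (1 - u * p)⁻¹) := by
    rw [Summable.tsum_eq_zero_add hFs.of_norm]
    have hF0 : F 0 = 0 := by simp [hFdef]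
    rw [hF0, zero_add]
    calc ∑' k, F (k + 1) = ∑' k, u * p * B k := tsum_congr hFeq
      _ = u * p * ∑' k, B k := by rw [tsum_mul_left]
      _ = u * p * ((1 - u)⁻¹ * (1 - u * p)⁻¹) := by
          rw [hBdef, tsum_geom_partial u p hu hup]
  have htsumA : ∑' k, A k = (1 - u)⁻¹ * (1 - u * q)⁻¹ := tsum_geom_partial u q hu huq
  have htsumg : ∑' k, g k
      = (1 - u)⁻¹ * (1 - u * q)⁻¹ + u * p * ((1 - u)⁻¹ * (1 - u * p)⁻¹) := by
    calc ∑' k, g k = ∑' k, (A k + F k) := tsum_congr hgAF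
      _ = ∑' k, A k + ∑' k, F k := Summable.tsum_add hA.of_norm hFs.of_norm
      _ = _ := by rw [htsumA, htsumF]
  have hterm : ∀ v : ℕ, u ^ v * (∑ i ∈ Finset.range (v + 1), p ^ i) *
      (∑ j ∈ Finset.range (v + 1), q ^ j)
      = ∑ w ∈ Finset.range (v + 1), (u * p * q) ^ w * g (v - w) := by
    intro v
    rw [mul_assoc, geom_finID, Finset.mul_sum]
    refine Finset.sum_congr rfl fun w hw => ?_
    have hw' : w ≤ v := by simpa [Nat.lt_succ_iff] using hw
    have hu' : u ^ v = u ^ w * u ^ (v - w) := by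
      rw [← pow_add]
      congr 1
      omega
    have h2 : (u * p * q) ^ w = u ^ w * (p * q) ^ w := by
      rw [mul_pow, mul_pow, mul_pow]
      ring
    rw [hu', h2, hgdef]
    ring
  calc ∑' v : ℕ, u ^ v * (∑ j ∈ Finset.range (v + 1), p ^ j) *
        (∑ j ∈ Finset.range (v + 1), q ^ j)
      = ∑' v : ℕ, ∑ w ∈ Finset.range (v + 1), (u * p * q) ^ w * g (v - w) :=
        tsum_congr hterm
    _ = (∑' k : ℕ, (u * p * q) ^ k) * ∑' k, g k :=
        (tsum_mul_tsum_eq_tsum_sum_range_of_summable_norm hf hg).symm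
    _ = (1 - u * p * q)⁻¹ *
        ((1 - u)⁻¹ * (1 - u * q)⁻¹ + u * p * ((1 - u)⁻¹ * (1 - u * p)⁻¹)) := by
        rw [tsum_geometric_of_norm_lt_one hupq, htsumg]
    _ = (1 - p * q * u ^ 2) / ((1 - u * p * q) * (1 - u * p) * (1 - u * q) * (1 - u)) := by
        have h1 := ne1 u hu
        have h2 := ne1 (u * p) hup
        have h3 := ne1 (u * q) huq
        have h4 := ne1 (u * p * q) hupq
        field_simp
        ring
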